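/- For each fixed y ∈ ℝ, as x → 0 with x ≠ 0, the point F(x⁻², yx³ + x²) tends to the finite limit (y⁴ + 2y², −u(y⁴ + y², y²)). Hence every point (y⁴ + 2y², −u(y⁴ + y², y²)) is an asymptotic value of the Pinchuk map F. -/

import Mathlib

open Filter

/-- `t = xy − 1`. -/
noncomputable def tF (x y : ℝ) : ℝ := x * y - 1

/-- `h = t(xt + 1)`. -/
noncomputable def hF (x y : ℝ) : ℝ := tF x y * (x * tF x y + 1)

/-- `f = (xt + 1)²(t² + y)`. -/
noncomputable def fF (x y : ℝ) : ℝ := (x * tF x y + 1) ^ 2 * (tF x y ^ 2 + y)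

/-- `P = f + h`. -/
noncomputable def PF (x y : ℝ) : ℝ := fF x y + hF x y

/-- The auxiliary polynomial `u(f,h)`. -/
noncomputable def uF (f h : ℝ) : ℝ :=
  170 * f * h + 91 * h ^ 2 + 195 * f * h ^ 2 + 69 * h ^ 3 + 75 * f * h ^ 3 + (75 / 4) * h ^ 4

/-- `Q = −t² − 6th(h + 1) − u(f,h)`. -/
noncomputable def QF (x y : ℝ) : ℝ :=
  -tF x y ^ 2 - 6 * tF x y * hF x y * (hF x y + 1) - uF (fF x y) (hF x y)

/-!
Along the curve `(X, Y) = (x⁻², yx³ + x²)` one has `XY = 1 + yx`, so `t = yx`,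
`Xt + 1 = (y + x)/x`, and the pole of `Xt + 1` is cancelled in `h` and `f`:
`h = y² + yx` and `f = (y + x)²(y² + yx + 1)`. Since `P` and `Q` are polynomials in
`t, h, f`, they extend continuously to `x = 0`, with `t = 0`, `h = y²`, `f = y⁴ + y²`
there, while the curve itself escapes to infinity because `X = x⁻² → ∞`.
-/

open Topology

theorem continuous_uF : Continuous (Function.uncurry uF) := by
  unfold Function.uncurry uF
  fun_prop

theorem tendsto_uF {α : Type*} {l : Filter α} {F H : α → ℝ} {f h : ℝ}
    (hf : Tendsto F l (𝓝 f)) (hh : Tendsto H l (𝓝 h)) :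
    Tendsto (fun a => uF (F a) (H a)) l (𝓝 (uF f h)) :=
  continuous_uF.continuousAt.tendsto.comp (hf.prodMk_nhds hh)

theorem Filter.Tendsto.PF_QF {α : Type*} {l : Filter α} {X Y : α → ℝ} {t h f : ℝ}
    (ht : Tendsto (fun a => tF (X a) (Y a)) l (𝓝 t))
    (hh : Tendsto (fun a => hF (X a) (Y a)) l (𝓝 h))
    (hf : Tendsto (fun a => fF (X a) (Y a)) l (𝓝 f)) :
    Tendsto (fun a => (PF (X a) (Y a), QF (X a) (Y a))) l
      (𝓝 (f + h, -t ^ 2 - 6 * t * h * (h + 1) - uF f h)) :=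
  (hf.add hh).prodMk_nhds <|
    ((ht.pow 2).neg.sub ((ht.const_mul 6).mul hh |>.mul (hh.add_const 1))).sub (tendsto_uF hf hh)

theorem ContinuousAt.tendsto_nhdsNE_of_eq {α β : Type*} [TopologicalSpace α]
    [TopologicalSpace β] {k g : α → β} {a : α} (hg : ContinuousAt g a)
    (hkg : ∀ x ≠ a, k x = g x) : Tendsto k (𝓝[≠] a) (𝓝 (g a)) :=
  (hg.tendsto.mono_left nhdsWithin_le_nhds).congr' <|
    eventually_nhdsWithin_of_forall fun x hx => (hkg x hx).symm

section PinchukCurve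

variable (y : ℝ) {x : ℝ}

theorem tF_pinchukCurve (hx : x ≠ 0) : tF (x⁻¹ ^ 2) (y * x ^ 3 + x ^ 2) = y * x := by
  unfold tF
  field_simp
  ring

theorem hF_pinchukCurve (hx : x ≠ 0) :
    hF (x⁻¹ ^ 2) (y * x ^ 3 + x ^ 2) = y ^ 2 + y * x := by
  rw [hF, tF_pinchukCurve y hx]
  field_simp

theorem fF_pinchukCurve (hx : x ≠ 0) :
    fF (x⁻¹ ^ 2) (y * x ^ 3 + x ^ 2) = (y + x) ^ 2 * (y ^ 2 + y * x + 1) := by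
  rw [fF, tF_pinchukCurve y hx]
  field_simp
  ring

theorem tendsto_tF_pinchukCurve :
    Tendsto (fun x => tF (x⁻¹ ^ 2) (y * x ^ 3 + x ^ 2)) (𝓝[≠] 0) (𝓝 0) := by
  have hg : ContinuousAt (fun x => y * x) 0 := by fun_prop
  simpa using hg.tendsto_nhdsNE_of_eq fun x hx => tF_pinchukCurve y hx

theorem tendsto_hF_pinchukCurve :
    Tendsto (fun x => hF (x⁻¹ ^ 2) (y * x ^ 3 + x ^ 2)) (𝓝[≠] 0) (𝓝 (y ^ 2)) := by
  have hg : ContinuousAt (fun x => y ^ 2 + y * x) 0 := by fun_prop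
  simpa using hg.tendsto_nhdsNE_of_eq fun x hx => hF_pinchukCurve y hx

theorem tendsto_fF_pinchukCurve :
    Tendsto (fun x => fF (x⁻¹ ^ 2) (y * x ^ 3 + x ^ 2)) (𝓝[≠] 0) (𝓝 (y ^ 4 + y ^ 2)) := by
  have hg : ContinuousAt (fun x => (y + x) ^ 2 * (y ^ 2 + y * x + 1)) 0 := by fun_prop
  convert hg.tendsto_nhdsNE_of_eq fun x hx => fF_pinchukCurve y hx using 2
  ring

end PinchukCurve

theorem tendsto_norm_inv_pow_nhdsNE_zero_atTop {𝕜 : Type*} [NormedDivisionRing 𝕜] {n : ℕ}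
    (hn : n ≠ 0) : Tendsto (fun x : 𝕜 => ‖x⁻¹ ^ n‖) (𝓝[≠] 0) atTop := by
  simpa only [norm_pow, Function.comp_def] using
    (tendsto_pow_atTop hn).comp tendsto_norm_inv_nhdsNE_zero_atTop

/-- For each fixed `y`, as `x → 0` (`x ≠ 0`) the curve `x ↦ (x⁻², yx³ + x²)`
tends to infinity, while the Pinchuk map `F = (P,Q)` along it tends to the
finite limit `(y⁴ + 2y², −u(y⁴ + y², y²))`; hence every such point is an
asymptotic value of `F`. -/
theorem pinchuk_asymptotic_values (y : ℝ) :
    Tendsto (fun x : ℝ => (PF (x⁻¹ ^ 2) (y * x ^ 3 + x ^ 2),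
        QF (x⁻¹ ^ 2) (y * x ^ 3 + x ^ 2)))
      (nhdsWithin 0 {(0 : ℝ)}ᶜ)
      (nhds (y ^ 4 + 2 * y ^ 2, -uF (y ^ 4 + y ^ 2) (y ^ 2))) ∧
    Tendsto (fun x : ℝ => ‖(x⁻¹ ^ 2, y * x ^ 3 + x ^ 2)‖)
      (nhdsWithin 0 {(0 : ℝ)}ᶜ) atTop := by
  refine ⟨?_, tendsto_atTop_mono (fun x => norm_fst_le _)
    (tendsto_norm_inv_pow_nhdsNE_zero_atTop two_ne_zero)⟩
  convert (tendsto_tF_pinchukCurve y).PF_QF (tendsto_hF_pinchukCurve y)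
    (tendsto_fF_pinchukCurve y) using 2
  ext
  · ring
  · simp
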